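/- arXiv:2410.17211 — 2 statements merged into one kernel-verified Lean document; each statement's English description precedes it below -/
import Mathlib

section
/- Fix γ ∈ (0,1] and τ > 0. There exists a family of functions L^ξ : ℝⁿ → iℝ indexed by ξ ∈ ℤⁿ (with L^0 = 0) such that: (i) |L^ξ(ω)| ≤ γ^{-1}|ξ|^τ for all ω ∈ ℝⁿ and ξ ≠ 0; (ii) |L^ξ(ω₁) − L^ξ(ω₂)| ≤ γ^{-2}|ξ|^{2τ+1}|ω₁−ω₂| for all ω₁,ω₂ ∈ ℝⁿ; (iii) L^ξ(ω) = 1/(i ω·ξ) whenever ω ∈ Dio(γ,τ) and ξ ≠ 0; (iv) L^{−ξ}(ω) = −L^ξ(ω) for all ξ and ω. -/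
/-!
On `Dio(γ, τ)` one has `|ω ⬝ ξ| ≥ ε := γ / |ξ| ^ τ`, so it suffices to extend `t ↦ t⁻¹` from
`{|t| ≥ ε}` to an odd function on `ℝ` with sup bound `ε⁻¹` and Lipschitz constant `ε⁻²`. The
explicit extension `t ↦ t / ε²` on `[-ε, ε]` does this, in place of the McShane extension.
Composing with `ω ↦ ω ⬝ ξ`, which is `|ξ|`-Lipschitz by Cauchy–Schwarz, and multiplying by `-i`
gives the multipliers, with constants `γ⁻¹ |ξ| ^ τ` and `γ⁻² |ξ| ^ (2τ + 1)`.
-/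

open Complex

noncomputable def truncInv (ε x : ℝ) : ℝ := x / max (ε ^ 2) (x ^ 2)

section truncInv

variable {ε : ℝ}

lemma truncInv_neg (x : ℝ) : truncInv ε (-x) = -truncInv ε x := by
  simp [truncInv, neg_div]

lemma truncInv_zero : truncInv ε 0 = 0 := by
  simp [truncInv]

lemma truncInv_of_abs_le {x : ℝ} (h : |x| ≤ ε) : truncInv ε x = x / ε ^ 2 := by
  rw [truncInv, max_eq_left (sq_le_sq.2 (h.trans (le_abs_self ε)))]

lemma truncInv_of_le_abs (hε : 0 < ε) {x : ℝ} (h : ε ≤ |x|) : truncInv ε x = x⁻¹ := by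
  rw [truncInv, max_eq_right (sq_le_sq.2 ((abs_of_pos hε).trans_le h)), sq, div_mul_cancel_left₀]
  exact abs_pos.1 (hε.trans_le h)

lemma abs_truncInv_le (hε : 0 < ε) (x : ℝ) : |truncInv ε x| ≤ ε⁻¹ := by
  rcases le_total |x| ε with h | h
  · rw [truncInv_of_abs_le h, abs_div, abs_sq, div_le_iff₀ (by positivity)]
    calc |x| ≤ ε := h
      _ = ε⁻¹ * ε ^ 2 := by field_simp
  · rw [truncInv_of_le_abs hε h, abs_inv]
    exact inv_anti₀ hε h

lemma abs_truncInv_sub_le_of_abs_le_of_le_abs (hε : 0 < ε) {x y : ℝ} (hx : |x| ≤ ε)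
    (hy : ε ≤ |y|) : |truncInv ε x - truncInv ε y| ≤ |x - y| / ε ^ 2 := by
  have hy0 : 0 < |y| := hε.trans_le hy
  rw [truncInv_of_abs_le hx, truncInv_of_le_abs hε hy,
    show x / ε ^ 2 - y⁻¹ = (x * y - ε ^ 2) / ε ^ 2 * y⁻¹ by field_simp [abs_pos.1 hy0],
    abs_mul, abs_inv, ← div_eq_mul_inv, div_le_div_iff₀ hy0 (by positivity), abs_div,
    abs_sq, div_mul_cancel₀ _ (by positivity)]
  -- `|xy - ε²| ≤ y² - xy = |x - y| |y|`, using `|xy| ≤ ε|y| ≤ (ε² + y²)/2`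
  have hxy : |x * y| ≤ ε * |y| := by rw [abs_mul]; gcongr
  rw [← abs_mul, abs_le]
  constructor <;> nlinarith [abs_le.1 hxy, sq_abs y, le_abs_self ((x - y) * y),
    neg_abs_le ((x - y) * y)]

lemma abs_truncInv_sub_le (hε : 0 < ε) (x y : ℝ) :
    |truncInv ε x - truncInv ε y| ≤ |x - y| / ε ^ 2 := by
  rcases le_total |x| ε with hx | hx <;> rcases le_total |y| ε with hy | hy
  · rw [truncInv_of_abs_le hx, truncInv_of_abs_le hy, ← sub_div, abs_div, abs_sq]
  · exact abs_truncInv_sub_le_of_abs_le_of_le_abs hε hx hy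
  · rw [abs_sub_comm, abs_sub_comm x]
    exact abs_truncInv_sub_le_of_abs_le_of_le_abs hε hy hx
  · have hx0 : x ≠ 0 := abs_pos.1 (hε.trans_le hx)
    have hy0 : y ≠ 0 := abs_pos.1 (hε.trans_le hy)
    rw [truncInv_of_le_abs hε hx, truncInv_of_le_abs hε hy, inv_sub_inv hx0 hy0, abs_div,
      abs_sub_comm, abs_mul, sq]
    gcongr

end truncInv

lemma abs_sum_mul_le_sqrt_mul_sqrt {ι : Type*} (s : Finset ι) (f g : ι → ℝ) :
    |∑ i ∈ s, f i * g i| ≤ √(∑ i ∈ s, f i ^ 2) * √(∑ i ∈ s, g i ^ 2) := by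
  rw [← Real.sqrt_mul (Finset.sum_nonneg fun i _ ↦ sq_nonneg (f i))]
  exact Real.abs_le_sqrt (Finset.sum_mul_sq_le_sq_mul_sq s f g)

noncomputable def latticeNorm {n : ℕ} (ξ : Fin n → ℤ) : ℝ := √(∑ i, (ξ i : ℝ) ^ 2)

lemma latticeNorm_nonneg {n : ℕ} (ξ : Fin n → ℤ) : 0 ≤ latticeNorm ξ :=
  Real.sqrt_nonneg _

lemma latticeNorm_pos {n : ℕ} {ξ : Fin n → ℤ} (hξ : ξ ≠ 0) : 0 < latticeNorm ξ := by
  obtain ⟨i, hi⟩ := Function.ne_iff.1 hξ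
  have hi : (ξ i : ℝ) ≠ 0 := Int.cast_ne_zero.2 hi
  exact Real.sqrt_pos.2 (Finset.sum_pos' (fun j _ ↦ sq_nonneg _)
    ⟨i, Finset.mem_univ i, by positivity⟩)

lemma latticeNorm_neg {n : ℕ} (ξ : Fin n → ℤ) : latticeNorm (-ξ) = latticeNorm ξ := by
  simp [latticeNorm]

noncomputable def smallDivisorMultiplier {n : ℕ} (γ τ : ℝ) (ξ : Fin n → ℤ) (ω : Fin n → ℝ) : ℂ :=
  -I * truncInv (γ / latticeNorm ξ ^ τ) (∑ i, ω i * ξ i)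

lemma norm_neg_I_mul_ofReal (r : ℝ) : ‖-I * r‖ = |r| := by
  simp

section smallDivisorMultiplier

variable {n : ℕ} {γ τ : ℝ}

lemma smallDivisorMultiplier_zero (ω : Fin n → ℝ) : smallDivisorMultiplier γ τ 0 ω = 0 := by
  simp [smallDivisorMultiplier, truncInv_zero]

lemma smallDivisorMultiplier_re (ξ : Fin n → ℤ) (ω : Fin n → ℝ) :
    (smallDivisorMultiplier γ τ ξ ω).re = 0 := by
  simp [smallDivisorMultiplier]

lemma smallDivisorMultiplier_neg (ξ : Fin n → ℤ) (ω : Fin n → ℝ) :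
    smallDivisorMultiplier γ τ (-ξ) ω = -smallDivisorMultiplier γ τ ξ ω := by
  simp [smallDivisorMultiplier, latticeNorm_neg, truncInv_neg]

lemma norm_smallDivisorMultiplier_le (hγ : 0 < γ) {ξ : Fin n → ℤ} (hξ : ξ ≠ 0)
    (ω : Fin n → ℝ) : ‖smallDivisorMultiplier γ τ ξ ω‖ ≤ γ⁻¹ * latticeNorm ξ ^ τ := by
  have hε : 0 < γ / latticeNorm ξ ^ τ := by have := latticeNorm_pos hξ; positivity
  rw [smallDivisorMultiplier, norm_neg_I_mul_ofReal]
  exact (abs_truncInv_le hε _).trans_eq (by rw [inv_div, div_eq_inv_mul])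

lemma norm_smallDivisorMultiplier_sub_le (hγ : 0 < γ) (ξ : Fin n → ℤ)
    (ω₁ ω₂ : Fin n → ℝ) :
    ‖smallDivisorMultiplier γ τ ξ ω₁ - smallDivisorMultiplier γ τ ξ ω₂‖ ≤
      γ⁻¹ ^ 2 * latticeNorm ξ ^ (2 * τ + 1) * √(∑ i, (ω₁ i - ω₂ i) ^ 2) := by
  rcases eq_or_ne ξ 0 with rfl | hξ
  · simp only [smallDivisorMultiplier_zero, sub_zero, norm_zero]
    have := latticeNorm_nonneg (0 : Fin n → ℤ)
    positivity
  have hN := latticeNorm_pos hξ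
  set ε := γ / latticeNorm ξ ^ τ
  have hε : 0 < ε := by positivity
  have hdot : |∑ i, ω₁ i * ξ i - ∑ i, ω₂ i * ξ i| ≤
      √(∑ i, (ω₁ i - ω₂ i) ^ 2) * latticeNorm ξ := by
    rw [← Finset.sum_sub_distrib, latticeNorm]
    simpa only [sub_mul, Pi.sub_apply] using
      abs_sum_mul_le_sqrt_mul_sqrt Finset.univ (ω₁ - ω₂) (fun i ↦ (ξ i : ℝ))
  have hconst : γ⁻¹ ^ 2 * latticeNorm ξ ^ (2 * τ + 1) = latticeNorm ξ / ε ^ 2 := by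
    rw [Real.rpow_add hN, Real.rpow_one, mul_comm 2 τ, Real.rpow_mul hN.le]
    simp only [ε]
    field_simp
    norm_cast
  calc ‖smallDivisorMultiplier γ τ ξ ω₁ - smallDivisorMultiplier γ τ ξ ω₂‖
      = |truncInv ε (∑ i, ω₁ i * ξ i) - truncInv ε (∑ i, ω₂ i * ξ i)| := by
        rw [smallDivisorMultiplier, smallDivisorMultiplier, ← mul_sub, ← ofReal_sub,
          norm_neg_I_mul_ofReal]
    _ ≤ |∑ i, ω₁ i * ξ i - ∑ i, ω₂ i * ξ i| / ε ^ 2 := abs_truncInv_sub_le hε _ _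
    _ ≤ √(∑ i, (ω₁ i - ω₂ i) ^ 2) * latticeNorm ξ / ε ^ 2 := by gcongr
    _ = _ := by rw [hconst]; ring

lemma smallDivisorMultiplier_of_diophantine (hγ : 0 < γ) {ξ : Fin n → ℤ} (hξ : ξ ≠ 0)
    {ω : Fin n → ℝ} (hω : γ / latticeNorm ξ ^ τ ≤ |∑ i, ω i * ξ i|) :
    smallDivisorMultiplier γ τ ξ ω = 1 / (I * ((∑ i, ω i * ξ i : ℝ) : ℂ)) := by
  have hε : 0 < γ / latticeNorm ξ ^ τ := by have := latticeNorm_pos hξ; positivity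
  rw [smallDivisorMultiplier, truncInv_of_le_abs hε hω, one_div, mul_inv, inv_I, ofReal_inv]

end smallDivisorMultiplier

theorem stmt3_general (n : ℕ) (γ τ : ℝ) (hγ0 : 0 < γ) :
    ∃ L : (Fin n → ℤ) → (Fin n → ℝ) → ℂ,
      (∀ ω, L 0 ω = 0) ∧
      (∀ ξ ω, (L ξ ω).re = 0) ∧
      (∀ ξ : Fin n → ℤ, ξ ≠ 0 → ∀ ω,
        ‖L ξ ω‖ ≤ γ⁻¹ * (Real.sqrt (∑ i, ((ξ i : ℝ)) ^ 2)) ^ τ) ∧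
      (∀ ξ : Fin n → ℤ, ∀ ω₁ ω₂ : Fin n → ℝ,
        ‖L ξ ω₁ - L ξ ω₂‖ ≤
          γ⁻¹ ^ 2 * (Real.sqrt (∑ i, ((ξ i : ℝ)) ^ 2)) ^ (2 * τ + 1) *
            Real.sqrt (∑ i, (ω₁ i - ω₂ i) ^ 2)) ∧
      (∀ ξ : Fin n → ℤ, ξ ≠ 0 → ∀ ω : Fin n → ℝ,
        (∀ ζ : Fin n → ℤ, ζ ≠ 0 →
          γ / (Real.sqrt (∑ i, ((ζ i : ℝ)) ^ 2)) ^ τ ≤ |∑ i, ω i * (ζ i : ℝ)|) →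
        L ξ ω = 1 / (Complex.I * ((∑ i, ω i * (ξ i : ℝ) : ℝ) : ℂ))) ∧
      (∀ ξ ω, L (-ξ) ω = - L ξ ω) :=
  ⟨smallDivisorMultiplier γ τ, smallDivisorMultiplier_zero, smallDivisorMultiplier_re,
    fun _ hξ ↦ norm_smallDivisorMultiplier_le hγ0 hξ,
    norm_smallDivisorMultiplier_sub_le hγ0,
    fun ξ hξ _ hω ↦ smallDivisorMultiplier_of_diophantine hγ0 hξ (hω ξ hξ),
    smallDivisorMultiplier_neg⟩

/-- Extension of the small-divisor Fourier multipliers `1/(iω·ξ)` from the Diophantine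
set to all of ℝⁿ, purely imaginary valued, with preserved bounds and Lipschitz
constants, odd in ξ. -/
theorem stmt3 (n : ℕ) (γ τ : ℝ) (hγ0 : 0 < γ) (hγ1 : γ ≤ 1) (hτ : 0 < τ) :
    ∃ L : (Fin n → ℤ) → (Fin n → ℝ) → ℂ,
      (∀ ω, L 0 ω = 0) ∧
      (∀ ξ ω, (L ξ ω).re = 0) ∧
      (∀ ξ : Fin n → ℤ, ξ ≠ 0 → ∀ ω,
        ‖L ξ ω‖ ≤ γ⁻¹ * (Real.sqrt (∑ i, ((ξ i : ℝ)) ^ 2)) ^ τ) ∧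
      (∀ ξ : Fin n → ℤ, ∀ ω₁ ω₂ : Fin n → ℝ,
        ‖L ξ ω₁ - L ξ ω₂‖ ≤
          γ⁻¹ ^ 2 * (Real.sqrt (∑ i, ((ξ i : ℝ)) ^ 2)) ^ (2 * τ + 1) *
            Real.sqrt (∑ i, (ω₁ i - ω₂ i) ^ 2)) ∧
      (∀ ξ : Fin n → ℤ, ξ ≠ 0 → ∀ ω : Fin n → ℝ,
        (∀ ζ : Fin n → ℤ, ζ ≠ 0 →
          γ / (Real.sqrt (∑ i, ((ζ i : ℝ)) ^ 2)) ^ τ ≤ |∑ i, ω i * (ζ i : ℝ)|) →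
        L ξ ω = 1 / (Complex.I * ((∑ i, ω i * (ξ i : ℝ) : ℝ) : ℂ))) ∧
      (∀ ξ ω, L (-ξ) ω = - L ξ ω) :=
  stmt3_general n γ τ hγ0
end

section
/- Let χ(x) = x + θ(x) be a map on 𝕋ⁿ with θ ∈ C¹, sup_x|∂_xθ| ≤ 0.99, let Θ(τ,x) = τ e^{−(1−τ)⟨D_x⟩}θ(x), and define the deformation vector field X(τ,x) = −(Iₙ + ∂_xΘ(τ,x))^{-1} ∂_τΘ(τ,x). Then for any f ∈ C¹(𝕋ⁿ), the deformation f^♯(τ,x) := f(x + Θ(τ,x)) solves the transport equation ∂_τ f^♯ + X·∇_x f^♯ = 0 on [0,1] × 𝕋ⁿ, with f^♯(0,x) = f(x) and f^♯(1,x) = f(χ(x)). -/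
/-!
Along the isotopy, `f^♯(τ, ·) = f ∘ (id + Θ τ)`, so the chain rule gives
`∂_τ f^♯ = ∂_τΘ ⬝ ∇f` and `∇ₓ f^♯ = (Iₙ + ∂ₓΘ)ᵀ ∇f`. Plugging in `X = -(Iₙ + ∂ₓΘ)⁻¹ ∂_τΘ`,
the matrix `Iₙ + ∂ₓΘ` cancels against its inverse in `X ⬝ ∇ₓ f^♯`, which leaves `-∂_τ f^♯`.
The inverse is a genuine one because the Frobenius norm of `∂ₓΘ` is below `1`
(Neumann series).
-/

/-- Partial derivative of a scalar function on ℝⁿ. -/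
noncomputable def pd {n : ℕ} (f : (Fin n → ℝ) → ℝ) (i : Fin n) (x : Fin n → ℝ) : ℝ :=
  deriv (fun s => f (Function.update x i s)) (x i)

/-- Spatial Jacobian matrix of a map ℝⁿ → ℝⁿ. -/
noncomputable def jacM {n : ℕ} (g : (Fin n → ℝ) → (Fin n → ℝ)) (x : Fin n → ℝ) :
    Matrix (Fin n) (Fin n) ℝ :=
  Matrix.of fun a b => pd (fun y => g y a) b x

open Matrix

section PartialDerivatives

variable {n : ℕ}

theorem pd_eq_of_hasFDerivAt {φ : (Fin n → ℝ) → ℝ} {L : (Fin n → ℝ) →L[ℝ] ℝ}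
    {x : Fin n → ℝ} (h : HasFDerivAt φ L x) (i : Fin n) :
    pd φ i x = L (Pi.single i 1) := by
  have h' : HasFDerivAt φ L (Function.update x i (x i)) := by rwa [Function.update_eq_self]
  exact (h'.comp_hasDerivAt (x i) (hasDerivAt_update x i (x i))).deriv

theorem HasFDerivAt.apply_eq_dotProduct_pd {φ : (Fin n → ℝ) → ℝ}
    {L : (Fin n → ℝ) →L[ℝ] ℝ} {x : Fin n → ℝ} (h : HasFDerivAt φ L x) (v : Fin n → ℝ) :
    L v = v ⬝ᵥ fun i => pd φ i x := by
  conv_lhs => rw [pi_eq_sum_univ' v]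
  simp [map_sum, dotProduct, pd_eq_of_hasFDerivAt h]

theorem jacM_eq_toMatrix' {g : (Fin n → ℝ) → (Fin n → ℝ)}
    {D : (Fin n → ℝ) →L[ℝ] (Fin n → ℝ)} {x : Fin n → ℝ} (h : HasFDerivAt g D x) :
    jacM g x = LinearMap.toMatrix' (D : (Fin n → ℝ) →ₗ[ℝ] (Fin n → ℝ)) := by
  ext a b
  have hg_a := (ContinuousLinearMap.proj (R := ℝ) (φ := fun _ : Fin n => ℝ) a).hasFDerivAt.comp x h
  exact pd_eq_of_hasFDerivAt hg_a b

theorem pd_comp_id_add {f : (Fin n → ℝ) → ℝ} {g : (Fin n → ℝ) → (Fin n → ℝ)}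
    {x : Fin n → ℝ} (hf : DifferentiableAt ℝ f (x + g x)) (hg : DifferentiableAt ℝ g x) :
    (fun i => pd (fun y => f (y + g y)) i x) =
      (fun a => pd f a (x + g x)) ᵥ* (1 + jacM g x) := by
  funext i
  have hcomp : HasFDerivAt (fun y => f (y + g y))
      ((fderiv ℝ f (x + g x)).comp (ContinuousLinearMap.id ℝ _ + fderiv ℝ g x)) x :=
    hf.hasFDerivAt.comp x ((hasFDerivAt_id x).add hg.hasFDerivAt)
  rw [pd_eq_of_hasFDerivAt hcomp, jacM_eq_toMatrix' hg.hasFDerivAt,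
    ContinuousLinearMap.comp_apply, hf.hasFDerivAt.apply_eq_dotProduct_pd, vecMul, dotProduct_comm]
  congr 1
  funext a
  simp [LinearMap.toMatrix'_apply, Matrix.one_apply, Pi.single_apply, eq_comm]

theorem hasDerivAt_comp_add_curve {f : (Fin n → ℝ) → ℝ} {γ : ℝ → (Fin n → ℝ)}
    {x : Fin n → ℝ} {τ : ℝ} (hf : DifferentiableAt ℝ f (x + γ τ))
    (hγ : DifferentiableAt ℝ γ τ) :
    HasDerivAt (fun s => f (x + γ s))
      ((fun i => deriv (fun s => γ s i) τ) ⬝ᵥ fun a => pd f a (x + γ τ)) τ := by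
  have := hf.hasFDerivAt.comp_hasDerivAt τ (hγ.hasDerivAt.const_add x)
  rwa [hf.hasFDerivAt.apply_eq_dotProduct_pd, deriv_pi] at this
  exact fun i => (hasDerivAt_pi.1 hγ.hasDerivAt i).differentiableAt

end PartialDerivatives

section MatrixFacts

variable {ι : Type*} [Fintype ι] [DecidableEq ι]

attribute [local instance] Matrix.frobeniusNormedAddCommGroup Matrix.frobeniusNormedSpace
  Matrix.frobeniusNormedRing

theorem Matrix.isUnit_one_add_of_sqrt_sum_sq_lt_one (J : Matrix ι ι ℝ)
    (hJ : √(∑ i, ∑ j, J i j ^ 2) < 1) : IsUnit (1 + J) := by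
  have hnorm : ‖-J‖ < 1 := by
    rw [norm_neg, Matrix.frobenius_norm_def, ← Real.sqrt_eq_rpow]
    simpa [Real.rpow_two] using hJ
  simpa using (Units.oneSub (-J) hnorm).isUnit

theorem Matrix.inv_mulVec_dotProduct_vecMul {R : Type*} [CommRing R] {A : Matrix ι ι R}
    (hA : IsUnit A) (v w : ι → R) : (A⁻¹ *ᵥ v) ⬝ᵥ (w ᵥ* A) = v ⬝ᵥ w := by
  rw [dotProduct_comm, ← dotProduct_mulVec, mulVec_mulVec,
    mul_nonsing_inv _ ((isUnit_iff_isUnit_det A).1 hA), one_mulVec, dotProduct_comm]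

end MatrixFacts

/-- For an isotopy Θ from 0 to θ with Jacobian bound 0.99, and the deformation vector
field X = −(Iₙ + ∂ₓΘ)⁻¹ ∂_τΘ, the deformation f^♯(τ,x) = f(x + Θ(τ,x)) of any C¹
function f solves the transport equation ∂_τ f^♯ + X·∇ₓ f^♯ = 0, and interpolates
between f and f∘χ, χ = Id + θ. -/
theorem stmt12 (n : ℕ) (θ : (Fin n → ℝ) → (Fin n → ℝ))
    (Θ : ℝ → (Fin n → ℝ) → (Fin n → ℝ))
    (hΘreg : ContDiff ℝ 1 (fun p : ℝ × (Fin n → ℝ) => Θ p.1 p.2))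
    (hΘ0 : ∀ x, Θ 0 x = 0)
    (hΘ1 : ∀ x, Θ 1 x = θ x)
    (hΘbd : ∀ τ ∈ Set.Icc (0:ℝ) 1, ∀ x,
      Real.sqrt (∑ i, ∑ j, (pd (fun y => Θ τ y j) i x) ^ 2) ≤ 0.99)
    (X : ℝ → (Fin n → ℝ) → (Fin n → ℝ))
    (hX : ∀ τ x, X τ x = fun j =>
      -∑ i, ((1 + jacM (Θ τ) x)⁻¹ : Matrix (Fin n) (Fin n) ℝ) j i *
        deriv (fun s => Θ s x i) τ)
    (f : (Fin n → ℝ) → ℝ) (hf : ContDiff ℝ 1 f) :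
    (∀ x, f (x + Θ 0 x) = f x) ∧
    (∀ x, f (x + Θ 1 x) = f (x + θ x)) ∧
    (∀ τ ∈ Set.Icc (0:ℝ) 1, ∀ x,
      HasDerivAt (fun s => f (x + Θ s x))
        (-(∑ i, X τ x i * pd (fun y => f (y + Θ τ y)) i x)) τ) := by
  refine ⟨fun x => by rw [hΘ0, add_zero], fun x => by rw [hΘ1], fun τ hτ x => ?_⟩
  have hΘdiff := hΘreg.differentiable one_ne_zero (τ, x)
  have hΘ_time : DifferentiableAt ℝ (fun s => Θ s x) τ :=
    hΘdiff.comp (f := fun s : ℝ => (s, x)) τ (differentiableAt_id.prodMk (differentiableAt_const x))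
  have hΘ_space : DifferentiableAt ℝ (Θ τ) x :=
    hΘdiff.comp (f := fun y => (τ, y)) x ((differentiableAt_const τ).prodMk differentiableAt_id)
  have hf_at : DifferentiableAt ℝ f (x + Θ τ x) := hf.differentiable one_ne_zero _
  have hunit : IsUnit (1 + jacM (Θ τ) x) := by
    refine Matrix.isUnit_one_add_of_sqrt_sum_sq_lt_one _ ((le_of_eq ?_).trans_lt
      ((hΘbd τ hτ x).trans_lt (by norm_num)))
    rw [Finset.sum_comm]
    rfl
  have hXτ : X τ x = -((1 + jacM (Θ τ) x)⁻¹ *ᵥ fun i => deriv (fun s => Θ s x i) τ) := by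
    rw [hX]
    funext j
    simp [mulVec, dotProduct]
  convert hasDerivAt_comp_add_curve hf_at hΘ_time using 1
  change -(X τ x ⬝ᵥ fun i => pd (fun y => f (y + Θ τ y)) i x) = _
  rw [pd_comp_id_add hf_at hΘ_space, hXτ, neg_dotProduct, neg_neg,
    Matrix.inv_mulVec_dotProduct_vecMul hunit]
end
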